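/- arXiv:2306.01089 — 3 statements merged into one kernel-verified Lean document; each statement's English description precedes it below -/
import Mathlib

section
/- Suppose x, y ∈ ℝ^m with ‖y‖ < ‖x‖ and x ≠ 0. Then the angle ψ(x, x+y) between x and x+y satisfies ψ(x, x+y) ≤ arcsin(‖y‖/‖x‖). Moreover, equality holds if and only if ⟨y, x+y⟩ = 0. -/
theorem angle_le_arcsin {m : ℕ}
    (ψ : EuclideanSpace ℝ (Fin m) → EuclideanSpace ℝ (Fin m) → ℝ)
    (hψ : ∀ u v, ψ u v = Real.arccos ((inner ℝ u v : ℝ) / (‖u‖ * ‖v‖)))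
    (x y : EuclideanSpace ℝ (Fin m)) (hx : x ≠ 0) (hxy : ‖y‖ < ‖x‖) :
    ψ x (x + y) ≤ Real.arcsin (‖y‖ / ‖x‖) ∧
      (ψ x (x + y) = Real.arcsin (‖y‖ / ‖x‖) ↔ (inner ℝ y (x + y) : ℝ) = 0) := by
  set z := x + y with hzdef
  have ha : (0:ℝ) < ‖x‖ := norm_pos_iff.2 hx
  have hb : (0:ℝ) ≤ ‖y‖ := norm_nonneg y
  have hn : (0:ℝ) < ‖z‖ := by
    have h1 : ‖x‖ ≤ ‖z‖ + ‖y‖ := by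
      calc ‖x‖ = ‖z - y‖ := by rw [hzdef]; congr 1; abel
        _ ≤ ‖z‖ + ‖y‖ := norm_sub_le _ _
    linarith
  set p : ℝ := inner ℝ x z with hpdef
  set q : ℝ := inner ℝ y z with hqdef
  have hxzy : x = z - y := by rw [hzdef]; abel
  have hp : p = ‖z‖ ^ 2 - q := by
    rw [hpdef, hxzy, inner_sub_left, real_inner_self_eq_norm_sq, hqdef]
  have hxx : ‖x‖ ^ 2 = ‖z‖ ^ 2 - 2 * q + ‖y‖ ^ 2 := by
    rw [hxzy, norm_sub_sq_real, real_inner_comm, ← hqdef]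
  set c : ℝ := p / (‖x‖ * ‖z‖) with hcdef
  have hcabs : |c| ≤ 1 := by
    rw [hcdef, abs_div, abs_of_pos (mul_pos ha hn), div_le_one (mul_pos ha hn)]
    exact abs_real_inner_le_norm x z
  have hc1 : c ≤ 1 := (abs_le.1 hcabs).2
  have hcm1 : -1 ≤ c := (abs_le.1 hcabs).1
  have hppos : 0 < p := by
    have h2 : p = ‖x‖ ^ 2 + inner ℝ x y := by
      rw [hpdef, hzdef, inner_add_right, real_inner_self_eq_norm_sq]
    have h3 : |(inner ℝ x y : ℝ)| ≤ ‖x‖ * ‖y‖ := abs_real_inner_le_norm x y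
    have h4 : -(‖x‖ * ‖y‖) ≤ (inner ℝ x y : ℝ) := (abs_le.1 h3).1
    nlinarith
  have hc0 : 0 < c := div_pos hppos (by positivity)
  set r : ℝ := ‖y‖ / ‖x‖ with hrdef
  have hr0 : 0 ≤ r := div_nonneg hb ha.le
  have hr1 : r < 1 := (div_lt_one ha).2 hxy
  -- key identity
  have key : 1 - c ^ 2 = r ^ 2 - (q / (‖x‖ * ‖z‖)) ^ 2 := by
    rw [hcdef, hrdef]
    field_simp
    linear_combination ‖z‖^2 * hxx - (p + ‖z‖^2 - q) * hp
  have h1c : 0 ≤ 1 - c ^ 2 := by nlinarith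
  have hle2 : 1 - c ^ 2 ≤ r ^ 2 := by
    rw [key]; nlinarith [sq_nonneg (q / (‖x‖ * ‖z‖))]
  set θ : ℝ := Real.arccos c with hθdef
  have hψxz : ψ x z = θ := by rw [hψ]
  have hθ0 : 0 ≤ θ := Real.arccos_nonneg c
  have hθhalf : θ < Real.pi / 2 := Real.arccos_lt_pi_div_two.2 hc0
  have hsin : Real.sin θ = Real.sqrt (1 - c ^ 2) := Real.sin_arccos c
  have hsinle : Real.sin θ ≤ r := by
    rw [hsin]
    calc Real.sqrt (1 - c ^ 2) ≤ Real.sqrt (r ^ 2) := Real.sqrt_le_sqrt hle2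
      _ = r := Real.sqrt_sq hr0
  have hθeq : Real.arcsin (Real.sin θ) = θ :=
    Real.arcsin_sin (by linarith [Real.pi_pos]) hθhalf.le
  have hsineq : Real.sin θ = r ↔ q = 0 := by
    constructor
    · intro h
      have h2 : 1 - c ^ 2 = r ^ 2 := by
        have := Real.sq_sqrt h1c
        rw [← hsin] at this
        rw [← this, h]
      have h3 : (q / (‖x‖ * ‖z‖)) ^ 2 = 0 := by linarith [key]
      have h4 : q / (‖x‖ * ‖z‖) = 0 := by
        exact pow_eq_zero_iff (n := 2) (by norm_num) |>.1 h3
      field_simp at h4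
      simpa using h4
    · intro h
      rw [hsin, key, h]
      simp [Real.sqrt_sq hr0]
  constructor
  · rw [hψxz, ← hθeq]
    exact Real.monotone_arcsin hsinle
  · rw [hψxz]
    constructor
    · intro h
      apply hsineq.1
      rw [h, Real.sin_arcsin (by linarith) hr1.le]
    · intro h
      rw [← hθeq, hsineq.2 h]
end

section
/- Let 0 ≤ x, y ≤ a < 1 and define g(x,y) = log(x·y + √((1-x²)·(1-y²))). Then g(x,y) ≥ -(x-y)²/(2·(1-a²)^{3/2}). -/
lemma log_key (t : ℝ) (ht : 0 < t) (ht1 : t ≤ 1) :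
    -(1 - t) / Real.sqrt t ≤ Real.log t := by
  have hst : 0 < Real.sqrt t := Real.sqrt_pos.mpr ht
  have hsq : Real.sqrt t * Real.sqrt t = t := Real.mul_self_sqrt ht.le
  have hlog : Real.log t ≤ 0 := Real.log_nonpos ht.le ht1
  set y : ℝ := -(Real.log t) / 2 with hy
  have hy0 : 0 ≤ y := by rw [hy]; linarith
  have hsinh : y ≤ Real.sinh y := Real.self_le_sinh_iff.mpr hy0
  have e1 : Real.exp y = (Real.sqrt t)⁻¹ := by
    rw [show y = Real.log t * (-(1/2)) by rw [hy]; ring, ← Real.rpow_def_of_pos ht,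
      Real.rpow_neg ht.le, ← Real.sqrt_eq_rpow]
  have e2 : Real.exp (-y) = Real.sqrt t := by
    rw [show -y = Real.log t * (1/2) by rw [hy]; ring, ← Real.rpow_def_of_pos ht,
      ← Real.sqrt_eq_rpow]
  rw [Real.sinh_eq, e1, e2] at hsinh
  rw [div_le_iff₀ hst]
  have : (Real.sqrt t)⁻¹ * Real.sqrt t = 1 := inv_mul_cancel₀ hst.ne'
  nlinarith [hsinh, hsq, this]

theorem log_affinity_lower_bound (x y a : ℝ)
    (hx0 : 0 ≤ x) (hxa : x ≤ a) (hy0 : 0 ≤ y) (hya : y ≤ a) (ha : a < 1) :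
    -(x - y) ^ 2 / (2 * (1 - a ^ 2) ^ ((3 : ℝ) / 2)) ≤
      Real.log (x * y + Real.sqrt ((1 - x ^ 2) * (1 - y ^ 2))) := by
  have ha0 : 0 ≤ a := hx0.trans hxa
  have hs2 : 0 < 1 - a ^ 2 := by nlinarith
  have hx2 : x ^ 2 ≤ a ^ 2 := by nlinarith
  have hy2 : y ^ 2 ≤ a ^ 2 := by nlinarith
  have hx2' : 0 < 1 - x ^ 2 := by linarith
  have hy2' : 0 < 1 - y ^ 2 := by linarith
  set u : ℝ := Real.sqrt (1 - x ^ 2) with hu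
  set v : ℝ := Real.sqrt (1 - y ^ 2) with hv
  set s : ℝ := Real.sqrt (1 - a ^ 2) with hsdef
  have hu2 : u ^ 2 = 1 - x ^ 2 := Real.sq_sqrt hx2'.le
  have hv2 : v ^ 2 = 1 - y ^ 2 := Real.sq_sqrt hy2'.le
  have hu0 : 0 < u := Real.sqrt_pos.mpr hx2'
  have hv0 : 0 < v := Real.sqrt_pos.mpr hy2'
  have hs0 : 0 < s := Real.sqrt_pos.mpr hs2
  have hss : s ^ 2 = 1 - a ^ 2 := Real.sq_sqrt hs2.le
  have hsu : s ≤ u := Real.sqrt_le_sqrt (by linarith)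
  have hsv : s ≤ v := Real.sqrt_le_sqrt (by linarith)
  have hmul : Real.sqrt ((1 - x ^ 2) * (1 - y ^ 2)) = u * v :=
    Real.sqrt_mul hx2'.le _
  rw [hmul]
  set t : ℝ := x * y + u * v with htdef
  have ht0 : 1 - a ^ 2 ≤ t := by
    have h1 : s * s ≤ u * v := mul_le_mul hsu hsv hs0.le hu0.le
    have h2 : 0 ≤ x * y := mul_nonneg hx0 hy0
    nlinarith [hss]
  have hst : s ≤ Real.sqrt t := by
    rw [hsdef]; exact Real.sqrt_le_sqrt ht0
  have hrw : (1 - a ^ 2) ^ ((3 : ℝ) / 2) = (1 - a ^ 2) * s := by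
    rw [hsdef, Real.sqrt_eq_rpow, show (3:ℝ)/2 = 1 + 1/2 by norm_num,
      Real.rpow_add hs2, Real.rpow_one]
  clear_value u v s t
  clear hu hv hsdef hmul
  have htpos : 0 < t := lt_of_lt_of_le hs2 ht0
  -- identity: 2 - 2t = (x-y)^2 + (u-v)^2
  have hid : 2 - 2 * t = (x - y) ^ 2 + (u - v) ^ 2 := by
    linear_combination -hu2 - hv2 - 2 * htdef
  have ht1 : t ≤ 1 := by linarith [sq_nonneg (x - y), sq_nonneg (u - v)]
  -- (u-v)^2 * (u+v)^2 = (x-y)^2 * (x+y)^2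
  have hkey : (u - v) ^ 2 * (u + v) ^ 2 = (x - y) ^ 2 * (x + y) ^ 2 := by
    have h : (u - v) * (u + v) = y ^ 2 - x ^ 2 := by linear_combination hu2 - hv2
    linear_combination ((u - v) * (u + v) + (y ^ 2 - x ^ 2)) * h
  have huv4 : 4 * (1 - a ^ 2) ≤ (u + v) ^ 2 := by
    have h2s : 2 * s ≤ u + v := by linarith
    have := pow_le_pow_left₀ (by positivity) h2s 2
    linarith [hss, this]
  have hxy4 : (x + y) ^ 2 ≤ 4 * a ^ 2 := by
    have h : x + y ≤ 2 * a := by linarith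
    have h1 := pow_le_pow_left₀ (by linarith : (0:ℝ) ≤ x + y) h 2
    have h2 : (2 * a) ^ 2 = 4 * a ^ 2 := by ring
    linarith
  have hduv : (u - v) ^ 2 * (1 - a ^ 2) ≤ (x - y) ^ 2 * a ^ 2 := by
    linarith [hkey, mul_le_mul_of_nonneg_left huv4 (sq_nonneg (u - v)),
      mul_le_mul_of_nonneg_left hxy4 (sq_nonneg (x - y))]
  -- 1 - t ≤ (x-y)^2 / (2*(1-a^2))
  have hgap : (1 - t) * (1 - a ^ 2) ≤ (x - y) ^ 2 / 2 := by
    have h1t := congrArg (fun z : ℝ => z * (1 - a ^ 2)) hid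
    nlinarith [h1t, hduv]
  -- main bound
  have hlog := log_key t htpos ht1
  have hgap0 : 0 ≤ 1 - t := by linarith
  have step : -((x - y) ^ 2 / (2 * (1 - a ^ 2))) / s ≤ -(1 - t) / Real.sqrt t := by
    rw [neg_div, neg_div, neg_le_neg_iff]
    have h1 : (1 - t) / Real.sqrt t ≤ (1 - t) / s :=
      div_le_div_of_nonneg_left hgap0 hs0 hst
    have h2 : (1 - t) / s ≤ ((x - y) ^ 2 / (2 * (1 - a ^ 2))) / s := by
      apply (div_le_div_iff_of_pos_right hs0).mpr
      rw [le_div_iff₀ (by linarith : (0:ℝ) < 2 * (1 - a ^ 2))]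
      linarith [hgap]
    linarith
  calc -(x - y) ^ 2 / (2 * (1 - a ^ 2) ^ ((3 : ℝ) / 2))
      = -((x - y) ^ 2 / (2 * (1 - a ^ 2))) / s := by
        rw [hrw, neg_div, neg_div, div_div]; ring_nf
    _ ≤ -(1 - t) / Real.sqrt t := step
    _ ≤ Real.log t := hlog
end

section
/- Let Θ = diag(θ) with θ ∈ (0,∞)^n, Π ∈ {0,1}^{n×K} a membership matrix (each row a standard basis vector of ℝ^K), P ∈ ℝ^{K×K} symmetric, and Ω = Θ·Π·P·Π'·Θ. If node i is in community k (row i of Π equals e_k) and node j is in community ℓ, then the cosine of the angle between the i-th and j-th columns of Ω equals M_{kℓ}/√(M_{kk}·M_{ℓℓ}), where M = P·Π'·Θ²·Π·P, provided M_{kk} > 0 and M_{ℓℓ} > 0. -/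
open Finset

theorem dcbm_cosine_structural_equivalence (n K : ℕ)
    (θ : Fin n → ℝ) (hθ : ∀ i, 0 < θ i)
    (c : Fin n → Fin K)
    (P : Matrix (Fin K) (Fin K) ℝ) (hP : P.IsSymm)
    (Ω : Matrix (Fin n) (Fin n) ℝ)
    (hΩ : ∀ i j, Ω i j = θ i * θ j * P (c i) (c j))
    (M : Matrix (Fin K) (Fin K) ℝ)
    (hM : ∀ k l, M k l = ∑ i, P k (c i) * θ i ^ 2 * P (c i) l)
    (i j : Fin n) (k l : Fin K) (hik : c i = k) (hjl : c j = l)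
    (hMk : 0 < M k k) (hMl : 0 < M l l) :
    (∑ r, Ω r i * Ω r j) /
        (Real.sqrt (∑ r, Ω r i ^ 2) * Real.sqrt (∑ r, Ω r j ^ 2))
      = M k l / Real.sqrt (M k k * M l l) := by
  have hPs : ∀ a b, P a b = P b a := fun a b => (hP.apply a b).symm
  have hnum : (∑ r, Ω r i * Ω r j) = θ i * θ j * M k l := by
    rw [hM, Finset.mul_sum]
    refine Finset.sum_congr rfl fun r _ => ?_
    rw [hΩ, hΩ, hik, hjl, hPs k (c r)]
    ring
  have hii : (∑ r, Ω r i ^ 2) = θ i ^ 2 * M k k := by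
    rw [hM, Finset.mul_sum]
    refine Finset.sum_congr rfl fun r _ => ?_
    rw [hΩ, hik, hPs k (c r)]
    ring
  have hjj : (∑ r, Ω r j ^ 2) = θ j ^ 2 * M l l := by
    rw [hM, Finset.mul_sum]
    refine Finset.sum_congr rfl fun r _ => ?_
    rw [hΩ, hjl, hPs l (c r)]
    ring
  rw [hnum, hii, hjj, Real.sqrt_mul (sq_nonneg _), Real.sqrt_mul (sq_nonneg _),
    Real.sqrt_sq (hθ i).le, Real.sqrt_sq (hθ j).le, Real.sqrt_mul hMk.le]
  have h1 : Real.sqrt (M k k) ≠ 0 := (Real.sqrt_pos.2 hMk).ne'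
  have h2 : Real.sqrt (M l l) ≠ 0 := (Real.sqrt_pos.2 hMl).ne'
  rw [div_eq_div_iff (by have := hθ i; have := hθ j; positivity) (by positivity)]
  ring
end
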